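/- Let f : M → M be a homeomorphism of a compact metric space whose non-wandering set is finite. Suppose ℱ = {Y₁,…,Y_L} is a finite family of subsets of M ∖ Ω(f) that is N-combinatorially complete for f. Then [c_{f,ℱ}(n)] = [n^L], provided ℱ consists of pairwise disjoint wandering sets. -/

import Mathlib

open Function Metric Set Topology Filter

variable {M : Type*}

/-- Y is a wandering set for f: f^n(Y) ∩ Y = ∅ for all n ≥ 1. -/
def Wandering (f : M → M) (Y : Set M) : Prop :=
  ∀ n : ℕ, 1 ≤ n → f^[n] '' Y ∩ Y = ∅

/-- The non-wandering set Ω(f). -/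
def NonwanderingSet [TopologicalSpace M] (f : M → M) : Set M :=
  {x | ∀ U : Set M, IsOpen U → x ∈ U → ∃ n : ℕ, 1 ≤ n ∧ (f^[n] '' U ∩ U).Nonempty}

/-- The word w (with letters in ℱ ∪ {∞}, where `some j` is the letter Y_j and `none`
is the letter ∞ = complement of ∪ℱ) is a coding of the orbit segment of x. -/
def Codes {L : ℕ} (f : M → M) (Y : Fin L → Set M) {n : ℕ}
    (w : Fin n → Option (Fin L)) (x : M) : Prop :=
  ∀ i : Fin n, (w i).elim (f^[(i : ℕ)] x ∉ ⋃ j, Y j) (fun j => f^[(i : ℕ)] x ∈ Y j)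

/-- 𝒜_n(f,ℱ): the set of all codings of all orbit segments of length n. -/
def CodingWords {L : ℕ} (f : M → M) (Y : Fin L → Set M) (n : ℕ) :
    Set (Fin n → Option (Fin L)) :=
  {w | ∃ x : M, Codes f Y w x}

/-- c_{f,ℱ}(n) = #𝒜_n(f,ℱ). -/
noncomputable def codingCount {L : ℕ} (f : M → M) (Y : Fin L → Set M) (n : ℕ) : ℕ :=
  Nat.card (CodingWords f Y n)

/-- The sets Y₁,…,Y_L are mutually singular: for every N there are a point x and times
t i with f^[t i] x ∈ Y i and |t i − t j| > N for i ≠ j. -/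
def MutuallySingular {L : ℕ} (f : M → M) (Y : Fin L → Set M) : Prop :=
  ∀ N : ℕ, ∃ x : M, ∃ t : Fin L → ℕ,
    (∀ i, f^[t i] x ∈ Y i) ∧ ∀ i j, i ≠ j → N < max (t i - t j) (t j - t i)

/-- E is an (n,ε)-separated set for f. -/
def Separated [MetricSpace M] (f : M → M) (ε : ℝ) (n : ℕ) (E : Set M) : Prop :=
  ∀ x ∈ E, ∀ y ∈ E, x ≠ y → ∃ i : ℕ, i < n ∧ ε ≤ dist (f^[i] x) (f^[i] y)

/-- s_{f,ε}(n): the maximal cardinality of an (n,ε)-separated set. -/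
noncomputable def sepCount [MetricSpace M] (f : M → M) (ε : ℝ) (n : ℕ) : ℕ :=
  sSup {k : ℕ | ∃ E : Finset M, Separated f ε n (E : Set M) ∧ E.card = k}

/-- The full orbit of p under the homeomorphism with inverse g. -/
def FullOrbit (f g : M → M) (p : M) : Set M :=
  {y | ∃ n : ℕ, y = f^[n] p ∨ y = g^[n] p}

/-- The stable set of a set A: points whose forward orbit converges to A. -/
def StableSetOf [MetricSpace M] (f : M → M) (A : Set M) : Set M :=
  {x | Tendsto (fun n => infDist (f^[n] x) A) atTop (nhds 0)}

/-- p is a periodic point of f. -/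
def IsPeriodicPoint (f : M → M) (p : M) : Prop := ∃ k : ℕ, 1 ≤ k ∧ f^[k] p = p

/-- The edge relation of the connection graph: p, q are periodic points with distinct
orbits and W^u(θ(p)) ∩ W^s(θ(q)) ≠ ∅. -/
def Conn [MetricSpace M] (f : M ≃ₜ M) (p q : M) : Prop :=
  IsPeriodicPoint ⇑f p ∧ IsPeriodicPoint ⇑f q ∧
  FullOrbit ⇑f ⇑f.symm p ≠ FullOrbit ⇑f ⇑f.symm q ∧
  (StableSetOf ⇑f.symm (FullOrbit ⇑f ⇑f.symm p) ∩
    StableSetOf ⇑f (FullOrbit ⇑f ⇑f.symm q)).Nonempty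

/-- L = L(f) is the length of the longest directed path in the connection graph. -/
def IsMaxPathLength [MetricSpace M] (f : M ≃ₜ M) (L : ℕ) : Prop :=
  (∃ c : Fin (L + 1) → M, ∀ i : Fin L, Conn f (c i.castSucc) (c i.succ)) ∧
  ∀ m : ℕ, (∃ c : Fin (m + 1) → M, ∀ i : Fin m, Conn f (c i.castSucc) (c i.succ)) → m ≤ L

/-- A topological rendering of the Morse–Smale condition: finite non-wandering set,
all non-wandering points periodic, and the no-tangency consequence of transversality:
if W^u(θ(p)) accumulates on W^s(θ(q)) then it meets it. -/
def MorseSmaleLike [MetricSpace M] (f : M ≃ₜ M) : Prop :=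
  (NonwanderingSet ⇑f).Finite ∧
  (∀ x ∈ NonwanderingSet ⇑f, IsPeriodicPoint ⇑f x) ∧
  ∀ p q : M, IsPeriodicPoint ⇑f p → IsPeriodicPoint ⇑f q →
    (closure (StableSetOf ⇑f.symm (FullOrbit ⇑f ⇑f.symm p)) ∩
      StableSetOf ⇑f (FullOrbit ⇑f ⇑f.symm q)).Nonempty →
    (StableSetOf ⇑f.symm (FullOrbit ⇑f ⇑f.symm p) ∩
      StableSetOf ⇑f (FullOrbit ⇑f ⇑f.symm q)).Nonempty

/-- ℱ = {Y₀,…,Y_L} (L+1 sets) is N-combinatorially complete for f: there are k₁,…,k_L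
such that for all transition times t i ≥ k i with N ∣ t i − k i there are points
x i ∈ Y i with x (i+1) = f^[t i] (x i). -/
def NCombComplete {M : Type*} {L : ℕ} (f : M → M) (Y : Fin (L + 1) → Set M) (N : ℕ) : Prop :=
  ∃ k : Fin L → ℕ, ∀ t : Fin L → ℕ,
    (∀ i, k i ≤ t i ∧ N ∣ t i - k i) →
    ∃ x : Fin (L + 1) → M, (∀ i, x i ∈ Y i) ∧
      ∀ i : Fin L, x i.succ = f^[t i] (x i.castSucc)

/-!
Because every Y i is wandering, an orbit segment visits each Y i at most once, so a coding
word is determined by the (at most L + 1) times at which its letters from ℱ occur: this gives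
c(n) ≤ (n + 1)^(L + 1). Conversely, combinatorial completeness lets one prescribe, up to a
bounded offset, the L + 1 visit times independently in arithmetic progressions of step N.
Pulling the first point back along the inverse homeomorphism, about (n / C)^(L + 1) choices of
visit times are realised inside a segment of length n, and disjointness of the Y i makes the
resulting coding words distinct.
-/

theorem Wandering.eq_of_iterate_mem {f : M → M} {Y : Set M} (hY : Wandering f Y) {x : M}
    {a b : ℕ} (ha : f^[a] x ∈ Y) (hb : f^[b] x ∈ Y) : a = b := by
  wlog hab : a ≤ b generalizing a b
  · exact (this hb ha (le_of_not_ge hab)).symm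
  obtain ⟨d, rfl⟩ := Nat.exists_eq_add_of_le hab
  rcases d with _ | d
  · rfl
  have hmem : f^[a + (d + 1)] x ∈ f^[d + 1] '' Y ∩ Y :=
    ⟨⟨f^[a] x, ha, by rw [← iterate_add_apply, add_comm]⟩, hb⟩
  rw [hY (d + 1) le_add_self] at hmem
  exact hmem.elim

theorem Fin.find?_eq_some_iff_of_unique {n : ℕ} {p : Fin n → Bool}
    (hp : ∀ a b, p a → p b → a = b) {i : Fin n} : Fin.find? p = some i ↔ p i := by
  rw [Fin.find?_eq_some_iff]
  refine ⟨And.left, fun hi => ⟨hi, fun j hji => ?_⟩⟩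
  by_contra hj
  exact hji.ne (hp j i (by simpa using hj) hi)

theorem Fin.eq_of_partialSum_add_eq {α : Type*} [AddCancelCommMonoid α] {n : ℕ} {s s' : α}
    {t t' : Fin n → α} (h : ∀ i, Fin.partialSum t i + s = Fin.partialSum t' i + s') :
    s = s' ∧ t = t' := by
  have hs : s = s' := by simpa using h 0
  refine ⟨hs, funext fun j => ?_⟩
  have hj := h j.succ
  rw [Fin.partialSum_succ, Fin.partialSum_succ, add_right_comm, add_right_comm _ (t' j),
    h j.castSucc] at hj
  exact add_left_cancel hj

theorem Fin.partialSum_le_sum {α : Type*} [AddCommMonoid α] [PartialOrder α]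
    [CanonicallyOrderedAdd α] [IsOrderedAddMonoid α] {n : ℕ} (t : Fin n → α) (i : Fin (n + 1)) :
    Fin.partialSum t i ≤ ∑ j, t j := by
  rw [Fin.partialSum, ← List.sum_ofFn]
  exact (List.take_sublist _ _).sum_le_sum fun _ _ => _root_.zero_le

theorem iterate_partialSum {f : M → M} {L : ℕ} {x : Fin (L + 1) → M} {t : Fin L → ℕ}
    (hx : ∀ i, x i.succ = f^[t i] (x i.castSucc)) (i : Fin (L + 1)) :
    f^[Fin.partialSum t i] (x 0) = x i := by
  induction i using Fin.induction with
  | zero => simp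
  | succ i ih => rw [Fin.partialSum_succ, add_comm, iterate_add_apply, ih, hx]

section Coding

variable {L n : ℕ} {f : M → M} {Y : Fin L → Set M} {w : Fin n → Option (Fin L)} {x : M}

theorem exists_codes (f : M → M) (Y : Fin L → Set M) (n : ℕ) (x : M) :
    ∃ w : Fin n → Option (Fin L), Codes f Y w x := by
  have hletter : ∀ i : Fin n, ∃ o : Option (Fin L),
      o.elim (f^[(i : ℕ)] x ∉ ⋃ j, Y j) fun j => f^[(i : ℕ)] x ∈ Y j := fun i => by
    by_cases h : f^[(i : ℕ)] x ∈ ⋃ j, Y j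
    · obtain ⟨j, hj⟩ := mem_iUnion.1 h
      exact ⟨some j, hj⟩
    · exact ⟨none, h⟩
  choose w hw using hletter
  exact ⟨w, hw⟩

theorem codingCount_pos [Nonempty M] (f : M → M) (Y : Fin L → Set M) (n : ℕ) :
    0 < codingCount f Y n := by
  obtain ⟨w, hw⟩ := exists_codes f Y n (Classical.arbitrary M)
  have : Nonempty (CodingWords f Y n) := ⟨⟨w, _, hw⟩⟩
  exact Nat.card_pos

theorem Codes.iterate_mem (hw : Codes f Y w x) {i : Fin n} {j : Fin L} (h : w i = some j) :
    f^[(i : ℕ)] x ∈ Y j := by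
  simpa [h] using hw i

theorem Codes.eq_some_of_iterate_mem (hdisj : Pairwise fun i j => Disjoint (Y i) (Y j))
    (hw : Codes f Y w x) {i : Fin n} {j : Fin L} (h : f^[(i : ℕ)] x ∈ Y j) : w i = some j := by
  have hi := hw i
  rcases hwi : w i with _ | j'
  · rw [hwi] at hi
    exact absurd (mem_iUnion.2 ⟨j, h⟩) hi
  · rw [hwi] at hi
    by_contra hne
    exact disjoint_left.1 (hdisj fun hj => hne (congrArg some hj)) hi h

theorem Codes.eq_of_eq_some (hwand : ∀ j, Wandering f (Y j)) (hw : Codes f Y w x)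
    {j : Fin L} {a b : Fin n} (ha : w a = some j) (hb : w b = some j) : a = b :=
  Fin.ext <| (hwand j).eq_of_iterate_mem (hw.iterate_mem ha) (hw.iterate_mem hb)

theorem codingCount_le (hwand : ∀ j, Wandering f (Y j)) (n : ℕ) :
    codingCount f Y n ≤ (n + 1) ^ L := by
  classical
  let visitTime : CodingWords f Y n → Fin L → Option (Fin n) :=
    fun w j => Fin.find? fun i => w.1 i = some j
  have hvisit : ∀ w : CodingWords f Y n, ∀ i j, visitTime w j = some i ↔ w.1 i = some j := by
    rintro ⟨w, x, hw⟩ i j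
    change Fin.find? (fun i => decide (w i = some j)) = some i ↔ _
    rw [Fin.find?_eq_some_iff_of_unique fun a b ha hb =>
      hw.eq_of_eq_some hwand (of_decide_eq_true ha) (of_decide_eq_true hb), decide_eq_true_iff]
  have hinj : Injective visitTime := fun w w' h =>
    Subtype.ext <| funext fun i => Option.ext fun j => by rw [← hvisit, ← hvisit, h]
  calc codingCount f Y n ≤ Nat.card (Fin L → Option (Fin n)) :=
        Nat.card_le_card_of_injective _ hinj
    _ = (n + 1) ^ L := by simp

theorem card_le_codingCount {ι : Type*} (hdisj : Pairwise fun i j => Disjoint (Y i) (Y j))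
    (hwand : ∀ j, Wandering f (Y j)) (y : ι → M) (T : ι → Fin L → Fin n) (hT : Injective T)
    (hvisit : ∀ a j, f^[(T a j : ℕ)] (y a) ∈ Y j) : Nat.card ι ≤ codingCount f Y n := by
  choose w hw using fun a => exists_codes f Y n (y a)
  refine Nat.card_le_card_of_injective (fun a => ⟨w a, y a, hw a⟩) fun a b hab =>
    hT (funext fun j => ?_)
  have hwab : w a = w b := congrArg Subtype.val hab
  have hb := (hw b).eq_some_of_iterate_mem hdisj (hvisit b j)
  rw [← hwab] at hb
  exact (hw a).eq_of_eq_some hwand ((hw a).eq_some_of_iterate_mem hdisj (hvisit a j)) hb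

end Coding

/-- The orbit waits `N * a 0` steps before its first visit and `k i + N * a (i + 1)` steps
between visits `i` and `i + 1`. -/
def visitTimes {L : ℕ} (N : ℕ) (k : Fin L → ℕ) (a : Fin (L + 1) → ℕ) : Fin (L + 1) → ℕ :=
  fun i => Fin.partialSum (fun j => k j + N * a j.succ) i + N * a 0

theorem visitTimes_injective {L N : ℕ} (hN : 0 < N) (k : Fin L → ℕ) :
    Injective (visitTimes N k) := by
  intro a b h
  obtain ⟨h0, hsucc⟩ := Fin.eq_of_partialSum_add_eq (congrFun h)
  refine funext fun i => Fin.cases ?_ (fun j => ?_) i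
  · exact Nat.eq_of_mul_eq_mul_left hN h0
  · exact Nat.eq_of_mul_eq_mul_left hN (Nat.add_left_cancel (congrFun hsucc j))

theorem visitTimes_lt {L N m : ℕ} (hN : 0 < N) (k : Fin L → ℕ) {a : Fin (L + 1) → ℕ}
    (ha : ∀ i, a i < m) (i : Fin (L + 1)) :
    visitTimes N k a i < ∑ j, k j + N * ((L + 1) * m) := by
  have hsum : ∑ i, a i < (L + 1) * m := by
    simpa using Finset.sum_lt_sum_of_nonempty Finset.univ_nonempty fun i _ => ha i
  calc visitTimes N k a i
      ≤ ∑ j, (k j + N * a j.succ) + N * a 0 := by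
        simp only [visitTimes]
        gcongr
        exact Fin.partialSum_le_sum _ i
    _ = ∑ j, k j + N * ∑ i, a i := by
        rw [Fin.sum_univ_succ, Finset.sum_add_distrib, ← Finset.mul_sum]
        ring
    _ < ∑ j, k j + N * ((L + 1) * m) := by gcongr

section CombComplete

variable {L N : ℕ} {f g : M → M} {Y : Fin (L + 1) → Set M}

theorem NCombComplete.nonempty (hcc : NCombComplete f Y N) : Nonempty M := by
  obtain ⟨k, hk⟩ := hcc
  obtain ⟨x, -, -⟩ := hk k fun i => ⟨le_rfl, by simp⟩
  exact ⟨x 0⟩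

theorem pow_le_codingCount_of_transitionTimes (hg : LeftInverse f g)
    (hdisj : Pairwise fun i j => Disjoint (Y i) (Y j)) (hwand : ∀ i, Wandering f (Y i))
    (hN : 0 < N) {k : Fin L → ℕ}
    (hk : ∀ t : Fin L → ℕ, (∀ i, k i ≤ t i ∧ N ∣ t i - k i) →
      ∃ x : Fin (L + 1) → M, (∀ i, x i ∈ Y i) ∧ ∀ i : Fin L, x i.succ = f^[t i] (x i.castSucc))
    {m n : ℕ} (hn : ∑ i, k i + N * ((L + 1) * m) ≤ n) :
    m ^ (L + 1) ≤ codingCount f Y n := by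
  choose x hxY hxt using fun a : Fin (L + 1) → Fin m =>
    hk (fun i => k i + N * a i.succ) fun i => ⟨le_add_right le_rfl, by simp⟩
  let T (a : Fin (L + 1) → Fin m) : Fin (L + 1) → ℕ := visitTimes N k fun i => a i
  have hT : ∀ a i, T a i < n := fun a i =>
    (visitTimes_lt hN k (fun i => (a i).isLt) i).trans_le hn
  have horbit : ∀ a i, f^[T a i] (g^[N * a 0] (x a 0)) = x a i := fun a i => by
    rw [show T a i = _ + _ from rfl, iterate_add_apply, hg.iterate _ _, iterate_partialSum (hxt a)]
  have hTinj : Injective T := (visitTimes_injective hN k).comp Fin.val_injective.comp_left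
  simpa using card_le_codingCount hdisj hwand (fun a => g^[N * a 0] (x a 0))
    (fun a i => ⟨T a i, hT a i⟩)
    (fun a b h => hTinj (funext fun i => congrArg Fin.val (congrFun h i)))
    (fun a i => (horbit a i).symm ▸ hxY a i)

theorem NCombComplete.exists_pow_le_codingCount (hcc : NCombComplete f Y N) (hN : 0 < N)
    (hg : LeftInverse f g) (hdisj : Pairwise fun i j => Disjoint (Y i) (Y j))
    (hwand : ∀ i, Wandering f (Y i)) :
    ∃ C, 0 < C ∧ ∀ m n, C * m ≤ n → m ^ (L + 1) ≤ codingCount f Y n := by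
  obtain ⟨k, hk⟩ := hcc
  refine ⟨∑ i, k i + N * (L + 1), by positivity, fun m n hmn => ?_⟩
  rcases m.eq_zero_or_pos with rfl | hm
  · simp
  refine pow_le_codingCount_of_transitionTimes hg hdisj hwand hN hk (le_trans ?_ hmn)
  calc ∑ i, k i + N * ((L + 1) * m) ≤ (∑ i, k i) * m + N * ((L + 1) * m) := by
        gcongr
        exact Nat.le_mul_of_pos_right _ hm
    _ = (∑ i, k i + N * (L + 1)) * m := by ring

end CombComplete

theorem exists_pos_mul_pow_le {u : ℕ → ℕ} {C d : ℕ} (hC : 0 < C) (hpos : ∀ n, 0 < u n)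
    (hlow : ∀ m n, C * m ≤ n → m ^ d ≤ u n) :
    ∃ c : ℝ, 0 < c ∧ ∀ n : ℕ, c * (n : ℝ) ^ d ≤ u n := by
  refine ⟨(1 / (2 * C)) ^ d, by positivity, fun n => ?_⟩
  set m := n / C
  have hmax : max 1 m ^ d ≤ u n := by
    rcases le_total 1 m with h | h
    · rw [max_eq_right h]
      exact hlow m n (Nat.mul_div_le n C)
    · rw [max_eq_left h, one_pow]
      exact hpos n
  have hn : (n : ℝ) / (2 * C) ≤ (max 1 m : ℕ) := by
    have hlt : (n : ℝ) < C * (m + 1) := by exact_mod_cast Nat.lt_mul_div_succ n hC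
    have hm : (m : ℝ) + 1 ≤ 2 * (max 1 m : ℕ) := by
      push_cast
      linarith [le_max_left (1 : ℝ) m, le_max_right (1 : ℝ) m]
    rw [div_le_iff₀ (by positivity)]
    nlinarith [(Nat.cast_pos.2 hC : (0 : ℝ) < C)]
  calc (1 / (2 * C)) ^ d * (n : ℝ) ^ d = ((n : ℝ) / (2 * C)) ^ d := by
        rw [← mul_pow, one_div_mul_eq_div]
    _ ≤ ((max 1 m : ℕ) : ℝ) ^ d := by gcongr
    _ ≤ u n := by exact_mod_cast hmax

theorem comb_complete_coding_growth_general {M : Type*} [MetricSpace M] (f : M ≃ₜ M)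
    {L : ℕ} (Y : Fin (L + 1) → Set M)
    (hdisj : Pairwise fun i j => Disjoint (Y i) (Y j))
    (hwand : ∀ i, Wandering ⇑f (Y i))
    (N : ℕ) (hN : 1 ≤ N) (hcc : NCombComplete ⇑f Y N) :
    ∃ c₁ c₂ : ℝ, 0 < c₁ ∧ 0 < c₂ ∧ ∀ n : ℕ, 1 ≤ n →
      c₁ * (n : ℝ) ^ (L + 1) ≤ (codingCount ⇑f Y n : ℝ) ∧
      (codingCount ⇑f Y n : ℝ) ≤ c₂ * (n : ℝ) ^ (L + 1) := by
  have := hcc.nonempty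
  obtain ⟨C, hC, hlow⟩ := hcc.exists_pow_le_codingCount hN f.apply_symm_apply hdisj hwand
  obtain ⟨c₁, hc₁, hc₁_le⟩ := exists_pos_mul_pow_le hC (codingCount_pos ⇑f Y) hlow
  refine ⟨c₁, 2 ^ (L + 1), hc₁, by positivity, fun n hn => ⟨hc₁_le n, ?_⟩⟩
  have hn' : (1 : ℝ) ≤ n := by exact_mod_cast hn
  calc (codingCount ⇑f Y n : ℝ) ≤ ((n : ℝ) + 1) ^ (L + 1) := by
        exact_mod_cast codingCount_le hwand n
    _ ≤ (2 * n) ^ (L + 1) := by gcongr; linarith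
    _ = 2 ^ (L + 1) * (n : ℝ) ^ (L + 1) := mul_pow _ _ _

/-- for a homeomorphism of a compact metric space with finite non-wandering
set and an N-combinatorially complete family of L+1 pairwise disjoint wandering subsets of
M ∖ Ω(f), one has [c_{f,ℱ}(n)] = [n^(L+1)] (family of size L+1, exponent L+1). -/
theorem comb_complete_coding_growth {M : Type*} [MetricSpace M] [CompactSpace M] (f : M ≃ₜ M)
    (hΩfin : (NonwanderingSet ⇑f).Finite)
    {L : ℕ} (Y : Fin (L + 1) → Set M)
    (hsub : ∀ i, Y i ⊆ (NonwanderingSet ⇑f)ᶜ)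
    (hdisj : Pairwise fun i j => Disjoint (Y i) (Y j))
    (hwand : ∀ i, Wandering ⇑f (Y i))
    (N : ℕ) (hN : 1 ≤ N) (hcc : NCombComplete ⇑f Y N) :
    ∃ c₁ c₂ : ℝ, 0 < c₁ ∧ 0 < c₂ ∧ ∀ n : ℕ, 1 ≤ n →
      c₁ * (n : ℝ) ^ (L + 1) ≤ (codingCount ⇑f Y n : ℝ) ∧
      (codingCount ⇑f Y n : ℝ) ≤ c₂ * (n : ℝ) ^ (L + 1) :=
  comb_complete_coding_growth_general f Y hdisj hwand N hN hcc
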